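/- For every integer n ≥ 3, the distribution of the major index over standard Young tableaux of shape (n,3,3) with exactly 2 descents satisfies f_{(n,3,3),2}(q) = q^9·[n−1 choose 2]_q. -/

import Mathlib

open Polynomial
open scoped Classical

noncomputable section

/-- The set of cells of the skew shape `outer \ inner`, where `outer` and `inner` are
lists of row lengths (rows and columns are 0-indexed): the cell `(r, c)` is present
iff `inner.getD r 0 ≤ c < outer.getD r 0`. -/
def skewCells (outer inner : List ℕ) : Finset (ℕ × ℕ) :=
  ((Finset.range outer.length) ×ˢ (Finset.range (outer.foldr max 0))).filter
    (fun p => inner.getD p.1 0 ≤ p.2 ∧ p.2 < outer.getD p.1 0)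

/-- `pos` encodes a standard Young tableau of skew shape `outer \ inner`:
`pos k` is the cell containing the entry `k + 1`.  The conditions say that the
entries are a bijective filling which increases left to right along rows and
top to bottom down columns. -/
def IsSYT (outer inner : List ℕ)
    (pos : Fin (skewCells outer inner).card → ↥(skewCells outer inner)) : Prop :=
  Function.Injective pos ∧
  (∀ a b, ((pos a : ℕ × ℕ)).1 = ((pos b : ℕ × ℕ)).1 →
      ((pos a : ℕ × ℕ)).2 < ((pos b : ℕ × ℕ)).2 → a < b) ∧
  (∀ a b, ((pos a : ℕ × ℕ)).2 = ((pos b : ℕ × ℕ)).2 →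
      ((pos a : ℕ × ℕ)).1 < ((pos b : ℕ × ℕ)).1 → a < b)

/-- The finite set of standard Young tableaux of skew shape `outer \ inner`. -/
def SYTs (outer inner : List ℕ) :
    Finset (Fin (skewCells outer inner).card → ↥(skewCells outer inner)) :=
  Finset.univ.filter (IsSYT outer inner)

/-- The descent set of the tableau `pos`: the values `v` such that `v + 1` lies in a
strictly lower row than `v` (entry `v` is at index `v - 1`, entry `v+1` at index `v`). -/
def desSet (outer inner : List ℕ)
    (pos : Fin (skewCells outer inner).card → ↥(skewCells outer inner)) : Finset ℕ :=
  (Finset.range (skewCells outer inner).card).filter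
    (fun v => ∃ a b : Fin (skewCells outer inner).card,
      (a : ℕ) + 1 = v ∧ (b : ℕ) = v ∧ ((pos a : ℕ × ℕ)).1 < ((pos b : ℕ × ℕ)).1)

/-- The major index of a tableau: the sum of its descents. -/
def majStat (outer inner : List ℕ)
    (pos : Fin (skewCells outer inner).card → ↥(skewCells outer inner)) : ℕ :=
  (desSet outer inner pos).sum id

/-- The number of descents of a tableau. -/
def desStat (outer inner : List ℕ)
    (pos : Fin (skewCells outer inner).card → ↥(skewCells outer inner)) : ℕ :=
  (desSet outer inner pos).card

/-- `f_{outer∖inner, i}(q) = Σ_{τ ∈ SYT(outer∖inner), des(τ) = i} q^{maj(τ)} ∈ ℤ[q]`. -/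
def fSkew (outer inner : List ℕ) (i : ℕ) : Polynomial ℤ :=
  ∑ pos ∈ (SYTs outer inner).filter (fun pos => desStat outer inner pos = i),
    X ^ majStat outer inner pos

/-- `f_{λ, i}(q)` for a straight (non-skew) shape `λ`. -/
def fPoly (lam : List ℕ) (i : ℕ) : Polynomial ℤ := fSkew lam [] i

/-- Gaussian binomial coefficients for natural arguments, via the q-Pascal recurrence
`[M+1, N+1]_q = [M, N+1]_q + q^(M-N) [M, N]_q`, with `[M, 0]_q = 1`, `[0, N+1]_q = 0`. -/
def qBinomAux : ℕ → ℕ → Polynomial ℤ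
  | _, 0 => 1
  | 0, _ + 1 => 0
  | M + 1, N + 1 => qBinomAux M (N + 1) + X ^ (M - N) * qBinomAux M N

/-- Gaussian binomial coefficient `[M choose N]_q ∈ ℤ[q]`, with the convention that
it is `0` unless `0 ≤ N ≤ M`. -/
def qBinom (M N : ℤ) : Polynomial ℤ :=
  if 0 ≤ N ∧ N ≤ M then qBinomAux M.toNat N.toNat else 0


def tcell (k m i : ℕ) : ℕ × ℕ :=
  if i < k then (0, i)
  else if i < k + 3 then (1, i - k)
  else if i < m then (0, i - 3)
  else if i < m + 3 then (2, i - m)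
  else (0, i - 6)

lemma tcell_inj {k m : ℕ} (hkm : k + 3 ≤ m) {i j : ℕ}
    (h : tcell k m i = tcell k m j) : i = j := by
  unfold tcell at h
  split_ifs at h <;> simp only [Prod.mk.injEq] at h <;> omega

lemma tcell_row_col {k m : ℕ} (hkm : k + 3 ≤ m) {i j : ℕ}
    (h1 : (tcell k m i).1 = (tcell k m j).1) (h2 : (tcell k m i).2 < (tcell k m j).2) :
    i < j := by
  unfold tcell at h1 h2
  split_ifs at h1 h2 <;> simp only at h1 h2 <;> omega

lemma tcell_col_row {k m : ℕ} (h3 : 3 ≤ k) (hkm : k + 3 ≤ m) {i j : ℕ}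
    (h1 : (tcell k m i).2 = (tcell k m j).2) (h2 : (tcell k m i).1 < (tcell k m j).1) :
    i < j := by
  unfold tcell at h1 h2
  split_ifs at h1 h2 <;> simp only at h1 h2 <;> omega

lemma tcell_descent {k m : ℕ} (h3 : 3 ≤ k) (hkm : k + 3 ≤ m) (i : ℕ) :
    (tcell k m i).1 < (tcell k m (i+1)).1 ↔ (i + 1 = k ∨ i + 1 = m) := by
  unfold tcell
  split_ifs <;> simp only <;> omega

lemma tcell_mem {n k m : ℕ} (h3 : 3 ≤ k) (hkn : k ≤ n) (hkm : k + 3 ≤ m)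
    (hm : m ≤ n + 3) {i : ℕ} (hi : i < n + 6) :
    ((tcell k m i).1 = 0 ∧ (tcell k m i).2 < n) ∨
    ((tcell k m i).1 = 1 ∧ (tcell k m i).2 < 3) ∨
    ((tcell k m i).1 = 2 ∧ (tcell k m i).2 < 3) := by
  unfold tcell
  split_ifs <;> simp <;> omega


lemma mem_cells (n : ℕ) (hn : 3 ≤ n) (p : ℕ × ℕ) :
    p ∈ skewCells [n,3,3] [] ↔
      (p.1 = 0 ∧ p.2 < n) ∨ (p.1 = 1 ∧ p.2 < 3) ∨ (p.1 = 2 ∧ p.2 < 3) := by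
  obtain ⟨r, c⟩ := p
  rw [skewCells, Finset.mem_filter]
  simp only [skewCells, Finset.mem_filter, Finset.mem_product, Finset.mem_range,
    List.length, List.getD]
  constructor
  · rintro ⟨⟨hr, hc⟩, -, h2⟩
    interval_cases r <;> simp_all [List.getD]
  · rintro (⟨h1, h2⟩ | ⟨h1, h2⟩ | ⟨h1, h2⟩) <;> subst h1 <;>
      simp_all [List.getD] <;> omega

lemma cells_eq (n : ℕ) (hn : 3 ≤ n) :
    skewCells [n,3,3] [] =
      ({0} ×ˢ Finset.range n) ∪ ({1} ×ˢ Finset.range 3) ∪ ({2} ×ˢ Finset.range 3) := by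
  ext ⟨r, c⟩
  simp [mem_cells n hn (r, c)]; omega

lemma card_cells (n : ℕ) (hn : 3 ≤ n) : (skewCells [n,3,3] []).card = n + 6 := by
  rw [cells_eq n hn, Finset.card_union_of_disjoint, Finset.card_union_of_disjoint] <;>
    simp [Finset.disjoint_left] <;> omega


def Pset (n : ℕ) : Finset (ℕ × ℕ) :=
  (Finset.range (n+1) ×ˢ Finset.range (n+4)).filter
    (fun p => 3 ≤ p.1 ∧ p.1 + 3 ≤ p.2 ∧ p.2 ≤ n + 3)

lemma mem_Pset {n : ℕ} {p : ℕ × ℕ} :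
    p ∈ Pset n ↔ 3 ≤ p.1 ∧ p.1 ≤ n ∧ p.1 + 3 ≤ p.2 ∧ p.2 ≤ n + 3 := by
  simp [Pset, Finset.mem_filter, Finset.mem_product]
  omega

lemma qBinomAux_one (M : ℕ) : qBinomAux M 1 = ∑ i ∈ Finset.range M, X ^ i := by
  induction M with
  | zero => simp [qBinomAux]
  | succ M ih =>
    rw [show qBinomAux (M+1) 1 = qBinomAux M 1 + X ^ (M - 0) * qBinomAux M 0 from rfl]
    simp [qBinomAux, ih, Finset.sum_range_succ, add_comm]

lemma qBinomAux_succ (M N : ℕ) :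
    qBinomAux (M+1) (N+1) = qBinomAux M (N+1) + X ^ (M - N) * qBinomAux M N := rfl

lemma sum_Pset (n : ℕ) (hn : 3 ≤ n) :
    ∑ p ∈ Pset n, (X : Polynomial ℤ) ^ (p.1 + p.2) = X ^ 9 * qBinomAux (n - 1) 2 := by
  obtain ⟨j, rfl⟩ : ∃ j, n = j + 3 := ⟨n - 3, by omega⟩
  clear hn
  induction j with
  | zero =>
    have : Pset 3 = {(3, 6)} := by decide
    rw [this]
    simp [qBinomAux]
  | succ j ih =>
    have hsplit : Pset (j + 4) = Pset (j + 3) ∪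
        (Finset.Icc 3 (j + 4)).image (fun k => (k, j + 7)) := by
      ext ⟨a, b⟩
      simp only [mem_Pset, Finset.mem_union, Finset.mem_image, Finset.mem_Icc,
        Prod.mk.injEq]
      constructor
      · rintro ⟨h1, h2, h3, h4⟩
        by_cases hb : b = j + 7
        · exact Or.inr ⟨a, by omega, rfl, hb.symm⟩
        · exact Or.inl ⟨h1, by omega, h3, by omega⟩
      · rintro (⟨h1, h2, h3, h4⟩ | ⟨c, hc, rfl, rfl⟩) <;> omega
    have hdisj : Disjoint (Pset (j + 3))
        ((Finset.Icc 3 (j + 4)).image (fun k => (k, j + 7))) := by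
      simp [Finset.disjoint_left, mem_Pset, Finset.mem_image]
      omega
    rw [hsplit, Finset.sum_union hdisj, ih]
    have hnew : ∑ p ∈ (Finset.Icc 3 (j + 4)).image (fun k => (k, j + 7)),
        (X : Polynomial ℤ) ^ (p.1 + p.2)
        = ∑ i ∈ Finset.range (j + 2), X ^ (i + (j + 10)) := by
      rw [Finset.sum_image (by intro a _ b _ h; simpa using h)]
      apply Finset.sum_nbij' (fun k => k - 3) (fun i => i + 3) <;>
        simp [Finset.mem_Icc] <;> intros <;> first | omega | (congr 1; omega)
    rw [hnew]
    have hq : qBinomAux (j + 4 - 1) 2 = qBinomAux (j + 2) 2 + X ^ (j + 1) * qBinomAux (j + 2) 1 := by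
      have h1 : j + 4 - 1 = (j + 2) + 1 := by omega
      rw [h1, qBinomAux_succ]
      norm_num
    rw [hq, qBinomAux_one, mul_add]
    congr 1
    rw [Finset.mul_sum, Finset.mul_sum]
    apply Finset.sum_congr rfl
    intro i hi
    ring


lemma tcell_at0 {k m i : ℕ} (h : i < k) : tcell k m i = (0, i) := by
  unfold tcell; rw [if_pos h]
lemma tcell_at1 {k m i : ℕ} (h1 : k ≤ i) (h2 : i < k + 3) : tcell k m i = (1, i - k) := by
  unfold tcell; rw [if_neg (by omega), if_pos h2]
lemma tcell_at2 {k m i : ℕ} (h1 : k + 3 ≤ i) (h2 : i < m) : tcell k m i = (0, i - 3) := by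
  unfold tcell; rw [if_neg (by omega), if_neg (by omega), if_pos h2]
lemma tcell_at3 {k m i : ℕ} (hkm : k + 3 ≤ m) (h1 : m ≤ i) (h2 : i < m + 3) :
    tcell k m i = (2, i - m) := by
  unfold tcell; rw [if_neg (by omega), if_neg (by omega), if_neg (by omega), if_pos h2]
lemma tcell_at4 {k m i : ℕ} (hkm : k + 3 ≤ m) (h1 : m + 3 ≤ i) : tcell k m i = (0, i - 6) := by
  unfold tcell
  rw [if_neg (by omega), if_neg (by omega), if_neg (by omega), if_neg (by omega)]

lemma abstract_structure (n : ℕ) (hn : 3 ≤ n) (P : ℕ → ℕ × ℕ) (k m : ℕ)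
    (hk1 : 1 ≤ k) (hkm : k < m) (hmN : m < n + 6)
    (c0 : ∀ i, i < n + 6 → ((P i).1 = 0 ∧ (P i).2 < n) ∨ ((P i).1 = 1 ∧ (P i).2 < 3) ∨
      ((P i).1 = 2 ∧ (P i).2 < 3))
    (c1 : ∀ i, i < n + 6 → ∀ j, j < n + 6 → P i = P j → i = j)
    (c2 : ∀ i, i < n + 6 → ∀ j, j < n + 6 → (P i).1 = (P j).1 → (P i).2 < (P j).2 → i < j)
    (c3 : ∀ i, i < n + 6 → ∀ j, j < n + 6 → (P i).2 = (P j).2 → (P i).1 < (P j).1 → i < j)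
    (c4 : ∀ r c : ℕ, ((r = 0 ∧ c < n) ∨ (r = 1 ∧ c < 3) ∨ (r = 2 ∧ c < 3)) →
      ∃ i, i < n + 6 ∧ P i = (r, c))
    (c5 : ∀ i, i + 1 < n + 6 → ((P i).1 < (P (i+1)).1 ↔ (i + 1 = k ∨ i + 1 = m))) :
    3 ≤ k ∧ k ≤ n ∧ k + 3 ≤ m ∧ m ≤ n + 3 ∧ ∀ i, i < n + 6 → P i = tcell k m i := by
  -- no-descent steps
  have norun : ∀ i, i + 1 < n + 6 → i + 1 ≠ k → i + 1 ≠ m → (P (i+1)).1 ≤ (P i).1 := by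
    intro i h h1 h2
    by_contra hc
    push_neg at hc
    rcases (c5 i h).1 hc with h' | h' <;> omega
  -- monotonicity of rows along descent-free stretches
  have runmono : ∀ d i, i + d < n + 6 → (∀ v, i < v → v ≤ i + d → v ≠ k ∧ v ≠ m) →
      (P (i + d)).1 ≤ (P i).1 := by
    intro d
    induction d with
    | zero => intro i _ _; exact le_rfl
    | succ d ih =>
      intro i hN hno
      have h1 : (P (i + d + 1)).1 ≤ (P (i + d)).1 := by
        rcases hno (i + d + 1) (by omega) (by omega) with ⟨ha, hb⟩
        exact norun (i + d) (by omega) ha hb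
      have h2 := ih i (by omega) (fun v hv1 hv2 => hno v hv1 (by omega))
      calc (P (i + (d+1))).1 = (P (i + d + 1)).1 := by ring_nf
        _ ≤ (P (i + d)).1 := h1
        _ ≤ (P i).1 := h2
  -- columns increase with index within a row
  have colmono : ∀ i, i < n + 6 → ∀ j, j < n + 6 → i < j → (P i).1 = (P j).1 →
      (P i).2 < (P j).2 := by
    intro i hi j hj hij hr
    rcases lt_trichotomy ((P i).2) ((P j).2) with h | h | h
    · exact h
    · exact absurd (c1 i hi j hj (Prod.ext hr h)) (by omega)
    · exact absurd (c2 j hj i hi hr.symm h) (by omega)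
  have hrow0 : (P 0).1 = 0 := by
    by_contra h
    have h0 : (0:ℕ) < n + 6 := by omega
    rcases c0 0 h0 with ⟨h1, h2⟩ | ⟨h1, h2⟩ | ⟨h1, h2⟩
    · exact h h1
    · obtain ⟨j, hj, hPj⟩ := c4 0 ((P 0).2) (Or.inl ⟨rfl, by omega⟩)
      have := c3 j hj 0 h0 (by rw [hPj]) (by rw [hPj]; omega)
      omega
    · obtain ⟨j, hj, hPj⟩ := c4 1 ((P 0).2) (Or.inr (Or.inl ⟨rfl, h2⟩))
      have := c3 j hj 0 h0 (by rw [hPj]) (by rw [hPj]; omega)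
      omega
  -- first run: P i = (0, i) for i < k
  have S1 : ∀ i, i < k → P i = (0, i) := by
    intro i
    induction i using Nat.strong_induction_on with
    | _ i IH =>
      intro hi
      have hiN : i < n + 6 := by omega
      have hrow : (P i).1 = 0 := by
        rcases Nat.eq_zero_or_pos i with rfl | hpos
        · exact hrow0
        · have hprev := IH (i-1) (by omega) (by omega)
          have hle : (P i).1 ≤ (P (i-1)).1 := by
            have := norun (i-1) (by omega) (by omega) (by omega)
            have he : i - 1 + 1 = i := by omega
            rwa [he] at this
          rw [hprev] at hle
          simpa using hle
      have hcolub : (P i).2 < n := by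
        rcases c0 i hiN with ⟨_, h⟩ | ⟨h, _⟩ | ⟨h, _⟩ <;> omega
      have hcge : i ≤ (P i).2 := by
        by_contra hc
        push_neg at hc
        have hPc := IH ((P i).2) (by omega) (by omega)
        have hPi : P i = (0, (P i).2) := Prod.ext hrow rfl
        have := c1 i hiN ((P i).2) (by omega) (hPi.trans hPc.symm)
        omega
      have hcle : (P i).2 ≤ i := by
        by_contra hc
        push_neg at hc
        obtain ⟨j, hjN, hPj⟩ := c4 0 ((P i).2 - 1) (Or.inl ⟨rfl, by omega⟩)
        have hji : j < i := by
          apply c2 j hjN i hiN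
          · rw [hPj, hrow]
          · rw [hPj]; simp; omega
        have hIH := IH j (by omega) (by omega)
        rw [hIH] at hPj
        have : j = (P i).2 - 1 := by
          have := congrArg Prod.snd hPj; simpa using this
        omega
      exact Prod.ext hrow (by omega)
  have hkN : k < n + 6 := by omega
  have hkn : k ≤ n := by
    have h1 := S1 (k-1) (by omega)
    have h2 := c0 (k-1) (by omega)
    rw [h1] at h2
    simp at h2
    omega
  have hdesk : (P (k-1)).1 < (P k).1 := by
    have := (c5 (k-1) (by omega)).2 (Or.inl (by omega))
    have he : k - 1 + 1 = k := by omega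
    rwa [he] at this
  have hrowk1 : (P (k-1)).1 = 0 := by rw [S1 (k-1) (by omega)]
  have hPk : P k = (1, 0) := by
    have hrge : 1 ≤ (P k).1 := by omega
    have hcolub : (P k).2 < 3 := by
      rcases c0 k hkN with ⟨h, _⟩ | ⟨_, h⟩ | ⟨_, h⟩ <;> omega
    have hrow : (P k).1 = 1 := by
      by_contra h
      have h2 : (P k).1 = 2 := by
        rcases c0 k hkN with ⟨h', _⟩ | ⟨h', _⟩ | ⟨h', _⟩ <;> omega
      obtain ⟨j, hjN, hPj⟩ := c4 1 ((P k).2) (Or.inr (Or.inl ⟨rfl, hcolub⟩))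
      have hjk : j < k := by
        apply c3 j hjN k hkN
        · rw [hPj]
        · rw [hPj]; omega
      have := S1 j hjk
      rw [this] at hPj
      have := congrArg Prod.fst hPj
      simp at this
    have hcol : (P k).2 = 0 := by
      by_contra hc
      obtain ⟨j, hjN, hPj⟩ := c4 1 ((P k).2 - 1) (Or.inr (Or.inl ⟨rfl, by omega⟩))
      have hjk : j < k := by
        apply c2 j hjN k hkN
        · rw [hPj, hrow]
        · rw [hPj]; simp; omega
      have := S1 j hjk
      rw [this] at hPj
      have := congrArg Prod.fst hPj
      simp at this
    exact Prod.ext hrow hcol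
  -- second run bound
  have runA : ∀ j, k ≤ j → j < m → (P j).1 ≤ 1 := by
    intro j h1 h2
    have := runmono (j - k) k (by omega) (fun v hv1 hv2 => ⟨by omega, by omega⟩)
    have he : k + (j - k) = j := by omega
    rw [he, hPk] at this
    simpa using this
  -- rows before m are at most 1
  have hlowm : ∀ j, j < m → (P j).1 ≤ 1 := by
    intro j hj
    rcases lt_or_ge j k with h | h
    · rw [S1 j h]; simp
    · exact runA j h hj
  have hdesm : (P (m-1)).1 < (P m).1 := by
    have := (c5 (m-1) (by omega)).2 (Or.inr (by omega))
    have he : m - 1 + 1 = m := by omega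
    rwa [he] at this
  have hrowm : (P m).1 = 2 := by
    have h1 : (P (m-1)).1 ≤ 1 := hlowm (m-1) (by omega)
    have hge : 1 ≤ (P m).1 := by omega
    by_contra h
    have hm1 : (P m).1 = 1 := by
      rcases c0 m hmN with ⟨h', _⟩ | ⟨h', _⟩ | ⟨h', _⟩ <;> omega
    -- then no index has row 2
    obtain ⟨j, hjN, hPj⟩ := c4 2 0 (Or.inr (Or.inr ⟨rfl, by omega⟩))
    have hj2 : (P j).1 = 2 := by rw [hPj]
    rcases lt_or_ge j m with h' | h'
    · have := hlowm j h'; omega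
    · have := runmono (j - m) m (by omega) (fun v hv1 hv2 => ⟨by omega, by omega⟩)
      have he : m + (j - m) = j := by omega
      rw [he] at this
      omega
  have hPm : P m = (2, 0) := by
    have hcol : (P m).2 = 0 := by
      by_contra hc
      have hcolub : (P m).2 < 3 := by
        rcases c0 m hmN with ⟨h, _⟩ | ⟨_, h⟩ | ⟨_, h⟩ <;> omega
      obtain ⟨j, hjN, hPj⟩ := c4 2 ((P m).2 - 1) (Or.inr (Or.inr ⟨rfl, by omega⟩))
      have hjm : j < m := by
        apply c2 j hjN m hmN
        · rw [hPj, hrowm]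
        · rw [hPj]; simp; omega
      have := hlowm j hjm
      rw [hPj] at this
      simp at this
    exact Prod.ext hrowm hcol
  -- all indices in [m, j] have row 2 whenever row j = 2
  have h2idx : ∀ j, j < n + 6 → (P j).1 = 2 → m ≤ j ∧ ∀ i, m ≤ i → i ≤ j → (P i).1 = 2 := by
    intro j hjN hj2
    have hmj : m ≤ j := by
      by_contra h
      push_neg at h
      have := hlowm j h
      omega
    refine ⟨hmj, fun i h1 h2 => ?_⟩
    have := runmono (j - i) i (by omega) (fun v hv1 hv2 => ⟨by omega, by omega⟩)
    have he : i + (j - i) = j := by omega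
    rw [he] at this
    have hub : (P i).1 ≤ 2 := by
      rcases c0 i (by omega) with ⟨h', _⟩ | ⟨h', _⟩ | ⟨h', _⟩ <;> omega
    omega
  -- the three cells of row 2 are at indices m, m+1, m+2
  have hPm12 : P (m+1) = (2, 1) ∧ P (m+2) = (2, 2) ∧ m + 2 < n + 6 := by
    obtain ⟨j2, hj2N, hPj2⟩ := c4 2 1 (Or.inr (Or.inr ⟨rfl, by omega⟩))
    obtain ⟨j3, hj3N, hPj3⟩ := c4 2 2 (Or.inr (Or.inr ⟨rfl, by omega⟩))
    have hmj2 : m < j2 := by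
      apply c2 m hmN j2 hj2N
      · rw [hPj2, hPm]
      · rw [hPj2, hPm]; norm_num
    have hj23 : j2 < j3 := by
      apply c2 j2 hj2N j3 hj3N
      · rw [hPj2, hPj3]
      · rw [hPj2, hPj3]; norm_num
    have hrows := (h2idx j3 hj3N (by rw [hPj3])).2
    have hj3ub : j3 ≤ m + 2 := by
      by_contra hc
      push_neg at hc
      -- indices m, m+1, m+2, m+3 all have row 2, columns strictly increase
      have r0 : (P m).1 = 2 := hrowm
      have r1 : (P (m+1)).1 = 2 := hrows (m+1) (by omega) (by omega)
      have r2 : (P (m+2)).1 = 2 := hrows (m+2) (by omega) (by omega)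
      have r3 : (P (m+3)).1 = 2 := hrows (m+3) (by omega) (by omega)
      have hc0 : (P m).2 = 0 := by rw [hPm]
      have m3N : m + 3 < n + 6 := by omega
      have a1 := colmono m (by omega) (m+1) (by omega) (by omega) (by omega)
      have a2 := colmono (m+1) (by omega) (m+2) (by omega) (by omega) (by omega)
      have a3 := colmono (m+2) (by omega) (m+3) (by omega) (by omega) (by omega)
      have hub : (P (m+3)).2 < 3 := by
        rcases c0 (m+3) m3N with ⟨h', _⟩ | ⟨h', _⟩ | ⟨h', _⟩ <;> omega
      omega
    have hj3 : j3 = m + 2 := by omega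
    have hj2 : j2 = m + 1 := by omega
    subst hj3 hj2
    exact ⟨hPj2, hPj3, by omega⟩
  obtain ⟨hPm1, hPm2, hm2N⟩ := hPm12
  have hmub : m ≤ n + 3 := by omega
  -- no other index has row 2
  have hno2 : ∀ j, j < n + 6 → (P j).1 = 2 → j = m ∨ j = m + 1 ∨ j = m + 2 := by
    intro j hjN hj2
    obtain ⟨hmj, hrows⟩ := h2idx j hjN hj2
    by_contra hc
    push_neg at hc
    have hj3 : m + 3 ≤ j := by omega
    have r3 : (P (m+3)).1 = 2 := hrows (m+3) (by omega) (by omega)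
    have a1 := colmono m (by omega) (m+1) (by omega) (by omega) (by rw [hrowm, hPm1])
    have a2 := colmono (m+1) (by omega) (m+2) (by omega) (by omega) (by rw [hPm1, hPm2])
    have a3 := colmono (m+2) (by omega) (m+3) (by omega) (by omega)
      (by rw [hPm2]; rw [r3])
    have hc0 : (P m).2 = 0 := by rw [hPm]
    have hub : (P (m+3)).2 < 3 := by
      rcases c0 (m+3) (by omega) with ⟨h', _⟩ | ⟨h', _⟩ | ⟨h', _⟩ <;> omega
    omega
  -- every index with row 1 lies in [k, m)
  have hall1 : ∀ j, j < n + 6 → (P j).1 = 1 → k ≤ j ∧ j < m := by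
    intro j hjN hj1
    constructor
    · by_contra h
      push_neg at h
      have := S1 j h
      rw [this] at hj1
      simp at hj1
    · by_contra h
      push_neg at h
      -- j ≥ m: j is not m, m+1, m+2 (those have row 2)
      have hne : j ≠ m ∧ j ≠ m + 1 ∧ j ≠ m + 2 := by
        refine ⟨?_, ?_, ?_⟩ <;> rintro rfl
        · rw [hrowm] at hj1; omega
        · rw [hPm1] at hj1; simp at hj1
        · rw [hPm2] at hj1; simp at hj1
      have hj3 : m + 3 ≤ j := by omega
      -- the cell below (1, c) is (2, c) at index m + c
      have hcolub : (P j).2 < 3 := by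
        rcases c0 j hjN with ⟨h', _⟩ | ⟨_, h'⟩ | ⟨_, h'⟩ <;> omega
      have hbelow : P (m + (P j).2) = (2, (P j).2) := by
        interval_cases h : (P j).2
        · simpa using hPm
        · simpa using hPm1
        · simpa using hPm2
      have := c3 j hjN (m + (P j).2) (by omega) (by rw [hbelow]) (by rw [hbelow, hj1]; norm_num)
      omega
  -- the three cells of row 1 are at indices k, k+1, k+2
  have hPk12 : P (k+1) = (1, 1) ∧ P (k+2) = (1, 2) ∧ k + 3 ≤ m := by
    obtain ⟨j2, hj2N, hPj2⟩ := c4 1 1 (Or.inr (Or.inl ⟨rfl, by omega⟩))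
    obtain ⟨j3, hj3N, hPj3⟩ := c4 1 2 (Or.inr (Or.inl ⟨rfl, by omega⟩))
    have hkj2 : k < j2 := by
      apply c2 k hkN j2 hj2N
      · rw [hPj2, hPk]
      · rw [hPj2, hPk]; norm_num
    have hj23 : j2 < j3 := by
      apply c2 j2 hj2N j3 hj3N
      · rw [hPj2, hPj3]
      · rw [hPj2, hPj3]; norm_num
    have hj3m : j3 < m := (hall1 j3 hj3N (by rw [hPj3])).2
    -- all indices in [k, j3] have row 1
    have hrows : ∀ i, k ≤ i → i ≤ j3 → (P i).1 = 1 := by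
      intro i h1 h2
      have hge : 1 ≤ (P i).1 := by
        have := runmono (j3 - i) i (by omega) (fun v hv1 hv2 => ⟨by omega, by omega⟩)
        have he : i + (j3 - i) = j3 := by omega
        rw [he, hPj3] at this
        simpa using this
      have hle := runA i h1 (by omega)
      omega
    have hj3ub : j3 ≤ k + 2 := by
      by_contra hc
      push_neg at hc
      have r0 : (P k).1 = 1 := by rw [hPk]
      have r1 : (P (k+1)).1 = 1 := hrows (k+1) (by omega) (by omega)
      have r2 : (P (k+2)).1 = 1 := hrows (k+2) (by omega) (by omega)
      have r3 : (P (k+3)).1 = 1 := hrows (k+3) (by omega) (by omega)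
      have hc0 : (P k).2 = 0 := by rw [hPk]
      have a1 := colmono k (by omega) (k+1) (by omega) (by omega) (by omega)
      have a2 := colmono (k+1) (by omega) (k+2) (by omega) (by omega) (by omega)
      have a3 := colmono (k+2) (by omega) (k+3) (by omega) (by omega) (by omega)
      have hub : (P (k+3)).2 < 3 := by
        rcases c0 (k+3) (by omega) with ⟨h', _⟩ | ⟨_, h'⟩ | ⟨_, h'⟩ <;> omega
      omega
    have hj3e : j3 = k + 2 := by omega
    have hj2e : j2 = k + 1 := by omega
    subst hj3e hj2e
    exact ⟨hPj2, hPj3, by omega⟩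
  obtain ⟨hPk1, hPk2, hk3m⟩ := hPk12
  -- no other index has row 1
  have hno1 : ∀ j, j < n + 6 → (P j).1 = 1 → j = k ∨ j = k + 1 ∨ j = k + 2 := by
    intro j hjN hj1
    obtain ⟨hkj, hjm⟩ := hall1 j hjN hj1
    by_contra hc
    push_neg at hc
    have hj3 : k + 3 ≤ j := by omega
    have hrows : ∀ i, k ≤ i → i ≤ j → (P i).1 = 1 := by
      intro i h1 h2
      have hge : 1 ≤ (P i).1 := by
        have := runmono (j - i) i (by omega) (fun v hv1 hv2 => ⟨by omega, by omega⟩)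
        have he : i + (j - i) = j := by omega
        rw [he] at this
        omega
      have hle := runA i h1 (by omega)
      omega
    have r3 : (P (k+3)).1 = 1 := hrows (k+3) (by omega) (by omega)
    have hc0 : (P k).2 = 0 := by rw [hPk]
    have a1 := colmono k (by omega) (k+1) (by omega) (by omega) (by rw [hPk, hPk1])
    have a2 := colmono (k+1) (by omega) (k+2) (by omega) (by omega) (by rw [hPk1, hPk2])
    have a3 := colmono (k+2) (by omega) (k+3) (by omega) (by omega) (by rw [hPk2, r3])
    have hub : (P (k+3)).2 < 3 := by
      rcases c0 (k+3) (by omega) with ⟨h', _⟩ | ⟨_, h'⟩ | ⟨_, h'⟩ <;> omega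
    omega
  -- k ≥ 3
  have h3k : 3 ≤ k := by
    obtain ⟨j, hjN, hPj⟩ := c4 0 2 (Or.inl ⟨rfl, by omega⟩)
    have hjk2 : j < k + 2 := by
      apply c3 j hjN (k+2) (by omega)
      · rw [hPj, hPk2]
      · rw [hPj, hPk2]; omega
    have hjk : j < k := by
      rcases lt_or_ge j k with h | h
      · exact h
      · exfalso
        have : j = k ∨ j = k + 1 := by omega
        rcases this with rfl | rfl
        · rw [hPk] at hPj; simp [Prod.ext_iff] at hPj
        · rw [hPk1] at hPj; simp [Prod.ext_iff] at hPj
    have := S1 j hjk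
    rw [this] at hPj
    have := congrArg Prod.snd hPj
    simp at this
    omega
  -- middle run of row 0
  have Smid : ∀ i, k + 3 ≤ i → i < m → P i = (0, i - 3) := by
    intro i
    induction i using Nat.strong_induction_on with
    | _ i IH =>
      intro h1 h2
      have hiN : i < n + 6 := by omega
      have hrow : (P i).1 = 0 := by
        have hle := runA i (by omega) h2
        have hne := hno1 i hiN
        rcases c0 i hiN with ⟨h', _⟩ | ⟨h', _⟩ | ⟨h', _⟩
        · exact h'
        · rcases hne h' with h'' | h'' | h'' <;> omega
        · omega
      have hcolub : (P i).2 < n := by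
        rcases c0 i hiN with ⟨_, h'⟩ | ⟨h', _⟩ | ⟨h', _⟩ <;> omega
      have hcge : i - 3 ≤ (P i).2 := by
        rcases Nat.eq_or_lt_of_le h1 with he | hlt
        · -- i = k + 3 : compare with index k - 1 (cell (0, k-1))
          have hp := S1 (k-1) (by omega)
          have := colmono (k-1) (by omega) i hiN (by omega) (by rw [hp, hrow])
          rw [hp] at this
          simp at this
          omega
        · have hp := IH (i-1) (by omega) (by omega) (by omega)
          have := colmono (i-1) (by omega) i hiN (by omega) (by rw [hp, hrow])
          rw [hp] at this
          simp at this
          omega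
      have hcle : (P i).2 ≤ i - 3 := by
        by_contra hc
        push_neg at hc
        obtain ⟨j, hjN, hPj⟩ := c4 0 ((P i).2 - 1) (Or.inl ⟨rfl, by omega⟩)
        have hji : j < i := by
          apply c2 j hjN i hiN
          · rw [hPj, hrow]
          · rw [hPj]; simp; omega
        have hjrow : (P j).1 = 0 := by rw [hPj]
        have hjcol : (P j).2 = (P i).2 - 1 := by rw [hPj]
        -- classify j
        rcases lt_or_ge j k with h' | h'
        · have := S1 j h'
          rw [this] at hPj
          have := congrArg Prod.snd hPj
          simp at this
          omega
        · have hne1 := hno1 j hjN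
          have : j ≠ k ∧ j ≠ k + 1 ∧ j ≠ k + 2 := by
            refine ⟨?_, ?_, ?_⟩ <;> rintro rfl
            · rw [hPk] at hPj; simp [Prod.ext_iff] at hPj
            · rw [hPk1] at hPj; simp [Prod.ext_iff] at hPj
            · rw [hPk2] at hPj; simp [Prod.ext_iff] at hPj
          have hj3 : k + 3 ≤ j := by omega
          have := IH j (by omega) hj3 (by omega)
          rw [this] at hPj
          have := congrArg Prod.snd hPj
          simp at this
          omega
      exact Prod.ext hrow (by omega)
  -- final run of row 0
  have Stail : ∀ i, m + 3 ≤ i → i < n + 6 → P i = (0, i - 6) := by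
    intro i
    induction i using Nat.strong_induction_on with
    | _ i IH =>
      intro h1 hiN
      have hrow : (P i).1 = 0 := by
        have hne2 := hno2 i hiN
        have hne1 := hno1 i hiN
        rcases c0 i hiN with ⟨h', _⟩ | ⟨h', _⟩ | ⟨h', _⟩
        · exact h'
        · rcases hne1 h' with h'' | h'' | h'' <;> omega
        · rcases hne2 h' with h'' | h'' | h'' <;> omega
      have hcolub : (P i).2 < n := by
        rcases c0 i hiN with ⟨_, h'⟩ | ⟨h', _⟩ | ⟨h', _⟩ <;> omega
      have hcge : i - 6 ≤ (P i).2 := by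
        rcases Nat.eq_or_lt_of_le h1 with he | hlt
        · -- i = m + 3 : the previous row-0 cell has column m - 4
          have hprev : ∃ j, j < i ∧ P j = (0, m - 4) := by
            rcases Nat.eq_or_lt_of_le hk3m with he2 | hlt2
            · exact ⟨k - 1, by omega, by rw [S1 (k-1) (by omega)]; exact Prod.ext rfl (by omega)⟩
            · exact ⟨m - 1, by omega, by rw [Smid (m-1) (by omega) (by omega)]; exact Prod.ext rfl (by omega)⟩
          obtain ⟨j, hji, hPj⟩ := hprev
          have := colmono j (by omega) i hiN hji (by rw [hPj, hrow])
          rw [hPj] at this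
          simp at this
          omega
        · have hp := IH (i-1) (by omega) (by omega) (by omega)
          have := colmono (i-1) (by omega) i hiN (by omega) (by rw [hp, hrow])
          rw [hp] at this
          simp at this
          omega
      have hcle : (P i).2 ≤ i - 6 := by
        by_contra hc
        push_neg at hc
        obtain ⟨j, hjN, hPj⟩ := c4 0 ((P i).2 - 1) (Or.inl ⟨rfl, by omega⟩)
        have hji : j < i := by
          apply c2 j hjN i hiN
          · rw [hPj, hrow]
          · rw [hPj]; simp; omega
        have hexc : j ≠ k ∧ j ≠ k + 1 ∧ j ≠ k + 2 ∧ j ≠ m ∧ j ≠ m + 1 ∧ j ≠ m + 2 := by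
          refine ⟨?_, ?_, ?_, ?_, ?_, ?_⟩ <;> rintro rfl
          · rw [hPk] at hPj; simp [Prod.ext_iff] at hPj
          · rw [hPk1] at hPj; simp [Prod.ext_iff] at hPj
          · rw [hPk2] at hPj; simp [Prod.ext_iff] at hPj
          · rw [hPm] at hPj; simp [Prod.ext_iff] at hPj
          · rw [hPm1] at hPj; simp [Prod.ext_iff] at hPj
          · rw [hPm2] at hPj; simp [Prod.ext_iff] at hPj
        rcases lt_or_ge j k with h' | h'
        · have := S1 j h'
          rw [this] at hPj
          have := congrArg Prod.snd hPj
          simp at this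
          omega
        · rcases lt_or_ge j m with h'' | h''
          · have := Smid j (by omega) h''
            rw [this] at hPj
            have := congrArg Prod.snd hPj
            simp at this
            omega
          · have := IH j hji (by omega) (by omega)
            rw [this] at hPj
            have := congrArg Prod.snd hPj
            simp at this
            omega
      exact Prod.ext hrow (by omega)
  refine ⟨h3k, hkn, hk3m, hmub, fun i hiN => ?_⟩
  rcases lt_or_ge i k with h | h
  · rw [S1 i h, tcell_at0 h]
  · rcases lt_or_ge i (k+3) with h' | h'
    · have : i = k ∨ i = k + 1 ∨ i = k + 2 := by omega
      rw [tcell_at1 h h']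
      rcases this with rfl | rfl | rfl
      · rw [hPk]; congr 1; omega
      · rw [hPk1]; congr 1; omega
      · rw [hPk2]; congr 1; omega
    · rcases lt_or_ge i m with h'' | h''
      · rw [Smid i h' h'', tcell_at2 h' h'']
      · rcases lt_or_ge i (m+3) with h''' | h'''
        · have : i = m ∨ i = m + 1 ∨ i = m + 2 := by omega
          rw [tcell_at3 hk3m h'' h''']
          rcases this with rfl | rfl | rfl
          · rw [hPm]; congr 1; omega
          · rw [hPm1]; congr 1; omega
          · rw [hPm2]; congr 1; omega
        · rw [Stail i h''' hiN, tcell_at4 hk3m h''']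


lemma mem_desSet_iff (n : ℕ)
    (pos : Fin (skewCells [n,3,3] []).card → ↥(skewCells [n,3,3] [])) (v : ℕ) :
    v ∈ desSet [n,3,3] [] pos ↔ ∃ (h2 : v < (skewCells [n,3,3] []).card), 1 ≤ v ∧
      ((pos ⟨v-1, by omega⟩ : ℕ × ℕ)).1 < ((pos ⟨v, h2⟩ : ℕ × ℕ)).1 := by
  unfold desSet
  simp only [Finset.mem_filter, Finset.mem_range]
  constructor
  · rintro ⟨hv, a, b, ha, hb, hlt⟩
    refine ⟨hv, by omega, ?_⟩
    have ea : (⟨v-1, by omega⟩ : Fin (skewCells [n,3,3] []).card) = a := by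
      apply Fin.ext; simp; omega
    have eb : (⟨v, hv⟩ : Fin (skewCells [n,3,3] []).card) = b := by
      apply Fin.ext; simp [hb]
    rw [ea, eb]
    exact hlt
  · rintro ⟨h2, h1, hlt⟩
    exact ⟨h2, ⟨v-1, by omega⟩, ⟨v, h2⟩, by simp; omega, rfl, hlt⟩


/-- For every integer `n ≥ 3`,
`f_{(n,3,3),2}(q) = q^9 · [n-1 choose 2]_q`. -/
theorem stmt16 (n : ℕ) (hn : 3 ≤ n) :
    fPoly [n, 3, 3] 2 = X ^ 9 * qBinom ((n : ℤ) - 1) 2 := by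
  have hcard : (skewCells [n,3,3] []).card = n + 6 := card_cells n hn
  have hq : qBinom ((n : ℤ) - 1) 2 = qBinomAux (n - 1) 2 := by
    unfold qBinom
    rw [if_pos ⟨by norm_num, by omega⟩]
    congr 1
    omega
  rw [hq, ← sum_Pset n hn]
  unfold fPoly fSkew
  -- forward structure: every tableau with two descents is a canonical one
  have key : ∀ pos ∈ (SYTs [n,3,3] []).filter (fun pos => desStat [n,3,3] [] pos = 2),
      ∃ k m : ℕ, 3 ≤ k ∧ k ≤ n ∧ k + 3 ≤ m ∧ m ≤ n + 3 ∧ k < m ∧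
        desSet [n,3,3] [] pos = {k, m} ∧
        ∀ i : Fin (skewCells [n,3,3] []).card, ((pos i : ℕ × ℕ)) = tcell k m i.1 := by
    intro pos hpos
    rw [Finset.mem_filter] at hpos
    obtain ⟨hS, hdes⟩ := hpos
    simp only [SYTs, Finset.mem_filter, Finset.mem_univ, true_and] at hS
    obtain ⟨hinj, hrow, hcol⟩ := hS
    have hbij : Function.Bijective pos := by
      rw [Fintype.bijective_iff_injective_and_card]
      exact ⟨hinj, by simp⟩
    have hD2 : (desSet [n,3,3] [] pos).card = 2 := hdes
    obtain ⟨x, y, hxy, hsetxy⟩ := Finset.card_eq_two.mp hD2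
    obtain ⟨k, m, hkm, hset⟩ : ∃ k m, k < m ∧ desSet [n,3,3] [] pos = {k, m} := by
      rcases hxy.lt_or_gt with h | h
      · exact ⟨x, y, h, hsetxy⟩
      · exact ⟨y, x, h, by rw [hsetxy, Finset.pair_comm]⟩
    have hkmem : k ∈ desSet [n,3,3] [] pos := by rw [hset]; simp
    have hmmem : m ∈ desSet [n,3,3] [] pos := by rw [hset]; simp
    rw [mem_desSet_iff] at hkmem hmmem
    obtain ⟨hkC, hk1, -⟩ := hkmem
    obtain ⟨hmC, hm1, -⟩ := hmmem
    set Pf : ℕ → ℕ × ℕ := fun i =>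
      if h : i < (skewCells [n,3,3] []).card then ((pos ⟨i, h⟩ : ℕ × ℕ)) else (0,0) with hPfdef
    have hPf : ∀ (i : ℕ) (h : i < (skewCells [n,3,3] []).card),
        Pf i = ((pos ⟨i, h⟩ : ℕ × ℕ)) := by
      intro i h
      rw [hPfdef]
      exact dif_pos h
    have c0 : ∀ i, i < n + 6 → ((Pf i).1 = 0 ∧ (Pf i).2 < n) ∨ ((Pf i).1 = 1 ∧ (Pf i).2 < 3) ∨
        ((Pf i).1 = 2 ∧ (Pf i).2 < 3) := by
      intro i hi
      have h : i < (skewCells [n,3,3] []).card := by omega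
      rw [hPf i h]
      have := (pos ⟨i, h⟩).2
      rwa [mem_cells n hn] at this
    have c1 : ∀ i, i < n + 6 → ∀ j, j < n + 6 → Pf i = Pf j → i = j := by
      intro i hi j hj hij
      have h : i < (skewCells [n,3,3] []).card := by omega
      have h' : j < (skewCells [n,3,3] []).card := by omega
      rw [hPf i h, hPf j h'] at hij
      have := hinj (Subtype.ext hij)
      simpa using congrArg Fin.val this
    have c2 : ∀ i, i < n + 6 → ∀ j, j < n + 6 →
        (Pf i).1 = (Pf j).1 → (Pf i).2 < (Pf j).2 → i < j := by
      intro i hi j hj h1 h2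
      have h : i < (skewCells [n,3,3] []).card := by omega
      have h' : j < (skewCells [n,3,3] []).card := by omega
      rw [hPf i h, hPf j h'] at h1 h2
      exact hrow ⟨i, h⟩ ⟨j, h'⟩ h1 h2
    have c3 : ∀ i, i < n + 6 → ∀ j, j < n + 6 →
        (Pf i).2 = (Pf j).2 → (Pf i).1 < (Pf j).1 → i < j := by
      intro i hi j hj h1 h2
      have h : i < (skewCells [n,3,3] []).card := by omega
      have h' : j < (skewCells [n,3,3] []).card := by omega
      rw [hPf i h, hPf j h'] at h1 h2
      exact hcol ⟨i, h⟩ ⟨j, h'⟩ h1 h2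
    have c4 : ∀ r c : ℕ, ((r = 0 ∧ c < n) ∨ (r = 1 ∧ c < 3) ∨ (r = 2 ∧ c < 3)) →
        ∃ i, i < n + 6 ∧ Pf i = (r, c) := by
      intro r c hrc
      have hcell : (r, c) ∈ skewCells [n,3,3] [] := (mem_cells n hn (r, c)).2 hrc
      obtain ⟨a, ha⟩ := hbij.2 ⟨(r, c), hcell⟩
      refine ⟨a.1, by omega, ?_⟩
      rw [hPf a.1 a.2]
      exact congrArg Subtype.val ha
    have c5 : ∀ i, i + 1 < n + 6 → ((Pf i).1 < (Pf (i+1)).1 ↔ (i + 1 = k ∨ i + 1 = m)) := by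
      intro i hi
      have h : i < (skewCells [n,3,3] []).card := by omega
      have h' : i + 1 < (skewCells [n,3,3] []).card := by omega
      rw [hPf i h, hPf (i+1) h']
      constructor
      · intro hlt
        have hmem : (i+1) ∈ desSet [n,3,3] [] pos := by
          rw [mem_desSet_iff]
          refine ⟨h', by omega, ?_⟩
          have e : (⟨i+1-1, by omega⟩ : Fin (skewCells [n,3,3] []).card) = ⟨i, h⟩ := by
            apply Fin.ext; simp
          rw [e]
          exact hlt
        rw [hset] at hmem
        simpa using hmem
      · intro hv
        have hmem : (i+1) ∈ desSet [n,3,3] [] pos := by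
          rw [hset]
          rcases hv with rfl | rfl <;> simp
        rw [mem_desSet_iff] at hmem
        obtain ⟨h2, -, hlt⟩ := hmem
        have e : (⟨i+1-1, by omega⟩ : Fin (skewCells [n,3,3] []).card) = ⟨i, h⟩ := by
          apply Fin.ext; simp
        rw [e] at hlt
        exact hlt
    obtain ⟨h3k, hkn, hk3m, hmub, hall⟩ :=
      abstract_structure n hn Pf k m hk1 hkm (by omega) c0 c1 c2 c3 c4 c5
    refine ⟨k, m, h3k, hkn, hk3m, hmub, hkm, hset, fun i => ?_⟩
    have := hall i.1 (by omega)
    rwa [hPf i.1 i.2] at this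
  -- backward: canonical tableaux exist
  have mk_pos : ∀ k m : ℕ, 3 ≤ k → k ≤ n → k + 3 ≤ m → m ≤ n + 3 →
      ∃ pos, pos ∈ (SYTs [n,3,3] []).filter (fun pos => desStat [n,3,3] [] pos = 2) ∧
        desSet [n,3,3] [] pos = {k, m} ∧
        ∀ i : Fin (skewCells [n,3,3] []).card, ((pos i : ℕ × ℕ)) = tcell k m i.1 := by
    intro k m h3k hkn hk3m hmub
    have hmem : ∀ i : Fin (skewCells [n,3,3] []).card, tcell k m i.1 ∈ skewCells [n,3,3] [] := by
      intro i
      rw [mem_cells n hn]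
      have := i.2
      exact tcell_mem h3k hkn hk3m hmub (by omega)
    set posc : Fin (skewCells [n,3,3] []).card → ↥(skewCells [n,3,3] []) :=
      fun i => ⟨tcell k m i.1, hmem i⟩ with hposc
    have hval : ∀ i : Fin (skewCells [n,3,3] []).card, ((posc i : ℕ × ℕ)) = tcell k m i.1 :=
      fun i => rfl
    have hds : desSet [n,3,3] [] posc = {k, m} := by
      ext v
      rw [mem_desSet_iff]
      constructor
      · rintro ⟨h2, h1, hlt⟩
        simp only [Finset.mem_insert, Finset.mem_singleton]
        have hlt' : (tcell k m (v-1)).1 < (tcell k m (v-1+1)).1 := by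
          have e : v - 1 + 1 = v := by omega
          rw [e]
          simpa using hlt
        have := (tcell_descent h3k hk3m (v-1)).1 hlt'
        omega
      · intro hv
        simp only [Finset.mem_insert, Finset.mem_singleton] at hv
        have hvC : v < (skewCells [n,3,3] []).card := by omega
        refine ⟨hvC, by omega, ?_⟩
        rw [hval, hval]
        have := (tcell_descent h3k hk3m (v-1)).2 (by omega)
        have e : v - 1 + 1 = v := by omega
        rwa [e] at this
    refine ⟨posc, ?_, hds, hval⟩
    rw [Finset.mem_filter]
    constructor
    · simp only [SYTs, Finset.mem_filter, Finset.mem_univ, true_and]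
      refine ⟨?_, ?_, ?_⟩
      · intro a b hab
        have : tcell k m a.1 = tcell k m b.1 := congrArg Subtype.val hab
        exact Fin.ext (tcell_inj hk3m this)
      · intro a b h1 h2
        rw [hval, hval] at h1 h2
        exact tcell_row_col hk3m h1 h2
      · intro a b h1 h2
        rw [hval, hval] at h1 h2
        exact tcell_col_row h3k hk3m h1 h2
    · show (desSet [n,3,3] [] posc).card = 2
      rw [hds]
      rw [Finset.card_insert_of_notMem (by simp; omega)]
      simp
  -- nonemptiness of descent sets
  have hne : ∀ pos ∈ (SYTs [n,3,3] []).filter (fun pos => desStat [n,3,3] [] pos = 2),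
      (desSet [n,3,3] [] pos).Nonempty := by
    intro pos hpos
    apply Finset.card_pos.mp
    have : desStat [n,3,3] [] pos = 2 := (Finset.mem_filter.mp hpos).2
    show (desSet [n,3,3] [] pos).card > 0
    rw [show (desSet [n,3,3] [] pos).card = desStat [n,3,3] [] pos from rfl, this]
    norm_num
  have minmax : ∀ (s : Finset ℕ) (H : s.Nonempty) (k m : ℕ), k < m → s = {k, m} →
      s.min' H = k ∧ s.max' H = m := by
    intro s H k m hkm hs
    subst hs
    constructor
    · refine le_antisymm (Finset.min'_le _ k (by simp)) (Finset.le_min' _ _ _ ?_)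
      intro y hy
      simp only [Finset.mem_insert, Finset.mem_singleton] at hy
      rcases hy with rfl | rfl <;> omega
    · refine le_antisymm (Finset.max'_le _ _ _ ?_) (Finset.le_max' _ m (by simp))
      intro y hy
      simp only [Finset.mem_insert, Finset.mem_singleton] at hy
      rcases hy with rfl | rfl <;> omega
  have hmaj : ∀ pos (k m : ℕ), k < m → desSet [n,3,3] [] pos = {k, m} →
      majStat [n,3,3] [] pos = k + m := by
    intro pos k m hkm hs
    show (desSet [n,3,3] [] pos).sum id = k + m
    rw [hs, Finset.sum_pair (by omega : k ≠ m)]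
    rfl
  refine Finset.sum_bij (fun pos hpos => ((desSet [n,3,3] [] pos).min' (hne pos hpos),
      (desSet [n,3,3] [] pos).max' (hne pos hpos))) ?_ ?_ ?_ ?_
  · intro pos hpos
    obtain ⟨k, m, h3k, hkn, hk3m, hmub, hkm, hset, -⟩ := key pos hpos
    obtain ⟨hmin, hmax⟩ := minmax _ (hne pos hpos) k m hkm hset
    rw [hmin, hmax, mem_Pset]
    exact ⟨h3k, hkn, hk3m, hmub⟩
  · intro p1 hp1 p2 hp2 heq
    obtain ⟨k1, m1, -, -, -, -, hkm1, hset1, hall1⟩ := key p1 hp1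
    obtain ⟨k2, m2, -, -, -, -, hkm2, hset2, hall2⟩ := key p2 hp2
    obtain ⟨hmin1, hmax1⟩ := minmax _ (hne p1 hp1) k1 m1 hkm1 hset1
    obtain ⟨hmin2, hmax2⟩ := minmax _ (hne p2 hp2) k2 m2 hkm2 hset2
    rw [hmin1, hmax1, hmin2, hmax2, Prod.mk.injEq] at heq
    obtain ⟨rfl, rfl⟩ : k1 = k2 ∧ m1 = m2 := ⟨heq.1, heq.2⟩
    funext i
    apply Subtype.ext
    rw [hall1 i, hall2 i]
  · intro p hp
    rw [mem_Pset] at hp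
    obtain ⟨h3k, hkn, hk3m, hmub⟩ := hp
    obtain ⟨pos, hmem, hds, -⟩ := mk_pos p.1 p.2 h3k hkn hk3m hmub
    refine ⟨pos, hmem, ?_⟩
    obtain ⟨hmin, hmax⟩ := minmax _ (hne pos hmem) p.1 p.2 (by omega) hds
    rw [hmin, hmax]
  · intro pos hpos
    obtain ⟨k, m, -, -, hk3m, -, hkm, hset, -⟩ := key pos hpos
    obtain ⟨hmin, hmax⟩ := minmax _ (hne pos hpos) k m hkm hset
    dsimp only
    rw [hmin, hmax, hmaj pos k m hkm hset]
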